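/- For the pressure and tangential-velocity boundary scheme, for any real j_y the vector m₀ = (ρ₀, J_x⁰, j_y, α λ² ρ₀, 0, 0, −λ² J_x⁰, −λ² j_y, β λ⁴ ρ₀)ᵗ satisfies K m₀ = M ξ₀, where ξ₀ = (0, 0, (−α − 2β + 4)ρ₀/18, 0, 0, J_x⁰/(6λ), −J_x⁰/(6λ), 0, 0)ᵗ; the family of solutions is parametrized by the kernel direction κ_y. -/

import Mathlib

open Matrix

noncomputable section

/-- D2Q9 moment matrix (equation 5). -/
def Md (l : ℝ) : Matrix (Fin 9) (Fin 9) ℝ :=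
  !![1, 1, 1, 1, 1, 1, 1, 1, 1;
     0, l, 0, -l, 0, l, -l, -l, l;
     0, 0, l, 0, -l, l, l, -l, -l;
     -4*l^2, -l^2, -l^2, -l^2, -l^2, 2*l^2, 2*l^2, 2*l^2, 2*l^2;
     0, l^2, -l^2, l^2, -l^2, 0, 0, 0, 0;
     0, 0, 0, 0, 0, l^2, -l^2, l^2, -l^2;
     0, -2*l^3, 0, 2*l^3, 0, l^3, -l^3, -l^3, l^3;
     0, 0, -2*l^3, 0, 2*l^3, l^3, l^3, -l^3, -l^3;
     4*l^4, -2*l^4, -2*l^4, -2*l^4, -2*l^4, l^4, l^4, l^4, l^4]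

/-- Fluid collision matrix (equation 14). -/
def Cfl (l a b se sx sq sd : ℝ) : Matrix (Fin 9) (Fin 9) ℝ :=
  !![1, 0, 0, 0, 0, 0, 0, 0, 0;
     0, 1, 0, 0, 0, 0, 0, 0, 0;
     0, 0, 1, 0, 0, 0, 0, 0, 0;
     a*se*l^2, 0, 0, 1 - se, 0, 0, 0, 0, 0;
     0, 0, 0, 0, 1 - sx, 0, 0, 0, 0;
     0, 0, 0, 0, 0, 1 - sx, 0, 0, 0;
     0, -sq*l^2, 0, 0, 0, 0, 1 - sq, 0, 0;
     0, 0, -sq*l^2, 0, 0, 0, 0, 1 - sq, 0;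
     b*sd*l^4, 0, 0, 0, 0, 0, 0, 0, 1 - sd]

/-- Matrix U (equation 21): diagonal 0/1 with ones at positions 0,1,3,4,7,8. -/
def Ub : Matrix (Fin 9) (Fin 9) ℝ :=
  !![1, 0, 0, 0, 0, 0, 0, 0, 0;
     0, 1, 0, 0, 0, 0, 0, 0, 0;
     0, 0, 0, 0, 0, 0, 0, 0, 0;
     0, 0, 0, 1, 0, 0, 0, 0, 0;
     0, 0, 0, 0, 1, 0, 0, 0, 0;
     0, 0, 0, 0, 0, 0, 0, 0, 0;
     0, 0, 0, 0, 0, 0, 0, 0, 0;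
     0, 0, 0, 0, 0, 0, 0, 1, 0;
     0, 0, 0, 0, 0, 0, 0, 0, 1]

/-- Pressure / tangential velocity interaction matrix T (equation 39). -/
def Tpv : Matrix (Fin 9) (Fin 9) ℝ :=
  !![0, 0, 0, 0, 0, 0, 0, 0, 0;
     0, 0, 0, 0, 0, 0, 0, 0, 0;
     0, 0, 0, 0, -1, 0, 0, 0, 0;
     0, 0, 0, 0, 0, 0, 0, 0, 0;
     0, 0, 0, 0, 0, 0, 0, 0, 0;
     0, 0, (1:ℝ)/6, 0, -(1:ℝ)/6, (1:ℝ)/6, (1:ℝ)/6, (5:ℝ)/6, -(1:ℝ)/6;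
     0, 0, (1:ℝ)/6, 0, -(1:ℝ)/6, (1:ℝ)/6, (1:ℝ)/6, -(1:ℝ)/6, (5:ℝ)/6;
     0, 0, 0, 0, 0, 0, 0, 0, 0;
     0, 0, 0, 0, 0, 0, 0, 0, 0]

/-- Pressure and tangential velocity boundary matrix K (equation 40). -/
def Kpv (l a b se sx sq sd : ℝ) : Matrix (Fin 9) (Fin 9) ℝ :=
  1 - Md l * (Tpv + Ub) * (Md l)⁻¹ * Cfl l a b se sx sq sd

/- The equilibrium moment vector `m₀` is fixed by the collision `C` and is the moment vector
`M f` of the equilibrium distribution `f`. Hence `K m₀ = m₀ - M (T + U) M⁻¹ m₀ = M (1 - T - U) f`,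
and it remains to evaluate `(1 - T - U) f`, in which `j_y` cancels. The moment matrix is
invertible because its rows are orthogonal. -/

theorem Matrix.one_sub_mul_mul_inv_mul_mulVec {n R : Type*} [Fintype n] [DecidableEq n]
    [CommRing R] {M P C : Matrix n n R} (hM : IsUnit M.det) {m f : n → R}
    (hCm : C *ᵥ m = m) (hMf : M *ᵥ f = m) :
    (1 - M * P * M⁻¹ * C) *ᵥ m = M *ᵥ ((1 - P) *ᵥ f) :=
  calc (1 - M * P * M⁻¹ * C) *ᵥ m = m - M *ᵥ (P *ᵥ (M⁻¹ *ᵥ (C *ᵥ m))) := by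
        rw [sub_mulVec, one_mulVec, ← mulVec_mulVec, ← mulVec_mulVec, ← mulVec_mulVec]
    _ = M *ᵥ f - M *ᵥ (P *ᵥ f) := by
        rw [hCm, ← hMf, mulVec_mulVec _ M⁻¹, nonsing_inv_mul _ hM, one_mulVec]
    _ = M *ᵥ ((1 - P) *ᵥ f) := by rw [sub_mulVec, one_mulVec, mulVec_sub]

def equilibriumMoments (l a b ρ jx jy : ℝ) : Fin 9 → ℝ :=
  ![ρ, jx, jy, a*l^2*ρ, 0, 0, -l^2*jx, -l^2*jy, b*l^4*ρ]

def equilibriumDistribution (l a b ρ jx jy : ℝ) : Fin 9 → ℝ :=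
  ![(4 - 4*a + 4*b)*ρ/36,
    (4 - a - 2*b)*ρ/36 + jx/(3*l),
    (4 - a - 2*b)*ρ/36 + jy/(3*l),
    (4 - a - 2*b)*ρ/36 - jx/(3*l),
    (4 - a - 2*b)*ρ/36 - jy/(3*l),
    (4 + 2*a + b)*ρ/36 + (jx + jy)/(12*l),
    (4 + 2*a + b)*ρ/36 + (-jx + jy)/(12*l),
    (4 + 2*a + b)*ρ/36 - (jx + jy)/(12*l),
    (4 + 2*a + b)*ρ/36 + (jx - jy)/(12*l)]

theorem Cfl_mulVec_equilibriumMoments (l a b se sx sq sd ρ jx jy : ℝ) :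
    Cfl l a b se sx sq sd *ᵥ equilibriumMoments l a b ρ jx jy =
      equilibriumMoments l a b ρ jx jy := by
  ext i
  fin_cases i <;> simp [Cfl, equilibriumMoments, mulVec, dotProduct, Fin.sum_univ_succ] <;> ring

/-- The rows of the moment matrix are orthogonal, and row `k` of `Md l` is `l ^ (order k)`
times row `k` of `Md 1`. -/
theorem Md_mul_transpose_Md_one (l : ℝ) :
    Md l * (Md 1)ᵀ =
      diagonal ![9, 6*l, 6*l, 36*l^2, 4*l^2, 4*l^2, 12*l^3, 12*l^3, 36*l^4] := by
  ext i j
  fin_cases i <;> fin_cases j <;> simp [Md, mul_apply, Fin.sum_univ_succ] <;> ring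

theorem isUnit_det_Md {l : ℝ} (hl : l ≠ 0) : IsUnit (Md l).det := by
  have h := congrArg det (Md_mul_transpose_Md_one l)
  simp only [det_mul, det_diagonal, Fin.prod_univ_succ] at h
  refine isUnit_iff_ne_zero.mpr fun h0 => ?_
  simp [h0, hl] at h

theorem Md_mulVec_equilibriumDistribution {l : ℝ} (hl : l ≠ 0) (a b ρ jx jy : ℝ) :
    Md l *ᵥ equilibriumDistribution l a b ρ jx jy = equilibriumMoments l a b ρ jx jy := by
  ext i
  fin_cases i <;>
    · simp [Md, equilibriumDistribution, equilibriumMoments, mulVec, dotProduct,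
        Fin.sum_univ_succ]
      field_simp
      ring

theorem one_sub_Tpv_add_Ub_mulVec_equilibriumDistribution (l a b ρ jx jy : ℝ) :
    (1 - (Tpv + Ub)) *ᵥ equilibriumDistribution l a b ρ jx jy =
      ![0, 0, (-a - 2*b + 4)*ρ/18, 0, 0, jx/(6*l), -jx/(6*l), 0, 0] := by
  rw [sub_mulVec, one_mulVec]
  ext i
  fin_cases i <;> simp [Tpv, Ub, equilibriumDistribution] <;> ring

theorem Kpv_order_zero_solution (l a b se sx sq sd ρ₀ Jx0 : ℝ) (hl : l ≠ 0) :
    ∀ jy : ℝ,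
      (Kpv l a b se sx sq sd).mulVec
          (![ρ₀, Jx0, jy, a*l^2*ρ₀, 0, 0, -l^2*Jx0, -l^2*jy, b*l^4*ρ₀])
        = (Md l).mulVec
          (![0, 0, (-a - 2*b + 4)*ρ₀/18, 0, 0, Jx0/(6*l), -Jx0/(6*l), 0, 0]) := by
  intro jy
  change Kpv l a b se sx sq sd *ᵥ equilibriumMoments l a b ρ₀ Jx0 jy = _
  rw [Kpv, one_sub_mul_mul_inv_mul_mulVec (isUnit_det_Md hl)
      (Cfl_mulVec_equilibriumMoments ..) (Md_mulVec_equilibriumDistribution hl ..),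
    one_sub_Tpv_add_Ub_mulVec_equilibriumDistribution]
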